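/- arXiv:1701.04719 — 2 statements merged into one kernel-verified Lean document; each statement's English description precedes it below -/
import Mathlib

section
/- Let n and m be unit vectors in a real inner product space E, and set P = id − n ⊗ n and P_h = id − m ⊗ m (the orthogonal projections onto the orthogonal complements of n and m respectively). Then the operator norm satisfies ‖P − P ∘ P_h ∘ P‖ ≤ 4 ‖n − m‖². (First projector bound of Lemma 4.4: with ‖n^e − n_h‖_{L∞} ≲ h^{k_g} on the surface this gives ‖P_Γ − P_Γ P_{Γ_h} P_Γ‖_{L∞(Γ)} ≲ h^{2k_g}.) -/
open scoped RealInnerProductSpace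

noncomputable def tensor {E : Type*} [NormedAddCommGroup E] [InnerProductSpace ℝ E]
    (a b : E) : E →L[ℝ] E :=
  (innerSL ℝ b).smulRight a

/-!
Write `P = id - n ⊗ n`. Since `P` is a symmetric idempotent,
`P - P (id - m ⊗ m) P = P (m ⊗ m) P = (P m) ⊗ (P m)`, an operator of norm `‖P m‖²`.
As `P n = 0`, `‖P m‖ = ‖P (m - n)‖ ≤ ‖P‖ ‖m - n‖ ≤ 2 ‖n - m‖`.
-/

section Tensor

variable {E : Type*} [NormedAddCommGroup E] [InnerProductSpace ℝ E]

@[simp]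
theorem tensor_apply (a b x : E) : tensor a b x = ⟪b, x⟫ • a := rfl

theorem norm_tensor (a b : E) : ‖tensor a b‖ = ‖b‖ * ‖a‖ := by
  rw [tensor, ContinuousLinearMap.norm_smulRight_apply, innerSL_apply_norm]

theorem comp_tensor (A : E →L[ℝ] E) (a b : E) : A ∘L tensor a b = tensor (A a) b := by
  ext x
  simp

theorem tensor_comp_of_isSymmetric {B : E →L[ℝ] E} (hB : (B : E →ₗ[ℝ] E).IsSymmetric)
    (a b : E) : tensor a b ∘L B = tensor a (B b) := by
  ext x
  have hBbx : ⟪B b, x⟫ = ⟪b, B x⟫ := hB b x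
  simp [hBbx]

theorem isSymmetric_tensor_self (n : E) : (tensor n n : E →ₗ[ℝ] E).IsSymmetric := by
  intro x y
  change ⟪⟪n, x⟫ • n, y⟫ = ⟪x, ⟪n, y⟫ • n⟫
  rw [real_inner_smul_left, real_inner_smul_right, real_inner_comm x n]
  ring

theorem isSymmetric_id_sub_tensor_self (n : E) :
    ((ContinuousLinearMap.id ℝ E - tensor n n : E →L[ℝ] E) : E →ₗ[ℝ] E).IsSymmetric := by
  simpa only [ContinuousLinearMap.toLinearMap_sub, ContinuousLinearMap.coe_id] using
    LinearMap.IsSymmetric.id.sub (isSymmetric_tensor_self n)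

theorem sub_comp_id_sub_tensor_comp {P : E →L[ℝ] E} (hP : IsIdempotentElem P)
    (hPsymm : (P : E →ₗ[ℝ] E).IsSymmetric) (m : E) :
    P - P ∘L (ContinuousLinearMap.id ℝ E - tensor m m) ∘L P = tensor (P m) (P m) := by
  rw [ContinuousLinearMap.sub_comp, ContinuousLinearMap.id_comp, ContinuousLinearMap.comp_sub,
    ← ContinuousLinearMap.mul_def P P, hP.eq, sub_sub_cancel, ← ContinuousLinearMap.comp_assoc,
    comp_tensor, tensor_comp_of_isSymmetric hPsymm]

end Tensor

section UnitVector

variable {E : Type*} [NormedAddCommGroup E] [InnerProductSpace ℝ E] {n : E}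

theorem id_sub_tensor_self_apply_self (hn : ‖n‖ = 1) :
    (ContinuousLinearMap.id ℝ E - tensor n n) n = 0 := by
  simp [hn]

theorem isIdempotentElem_id_sub_tensor_self (hn : ‖n‖ = 1) :
    IsIdempotentElem (ContinuousLinearMap.id ℝ E - tensor n n) := by
  ext x
  simp [inner_sub_right, real_inner_smul_right, hn]

theorem norm_id_sub_tensor_self_le (hn : ‖n‖ = 1) :
    ‖ContinuousLinearMap.id ℝ E - tensor n n‖ ≤ 2 := by
  calc ‖ContinuousLinearMap.id ℝ E - tensor n n‖
      ≤ ‖ContinuousLinearMap.id ℝ E‖ + ‖tensor n n‖ := norm_sub_le _ _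
    _ ≤ 1 + 1 := by
      gcongr
      · exact ContinuousLinearMap.norm_id_le
      · rw [norm_tensor, hn, one_mul]
    _ = 2 := by norm_num

theorem norm_id_sub_tensor_self_apply_le (hn : ‖n‖ = 1) (m : E) :
    ‖(ContinuousLinearMap.id ℝ E - tensor n n) m‖ ≤ 2 * ‖n - m‖ := by
  set P := ContinuousLinearMap.id ℝ E - tensor n n
  calc ‖P m‖ = ‖P (m - n)‖ := by rw [map_sub, id_sub_tensor_self_apply_self hn, sub_zero]
    _ ≤ ‖P‖ * ‖m - n‖ := P.le_opNorm _
    _ ≤ 2 * ‖n - m‖ := by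
      rw [norm_sub_rev m n]
      exact mul_le_mul_of_nonneg_right (norm_id_sub_tensor_self_le hn) (norm_nonneg _)

end UnitVector

theorem stmt_2_general {E : Type*} [NormedAddCommGroup E] [InnerProductSpace ℝ E]
    (n m : E) (hn : ‖n‖ = 1) :
    let P : E →L[ℝ] E := ContinuousLinearMap.id ℝ E - tensor n n
    let Ph : E →L[ℝ] E := ContinuousLinearMap.id ℝ E - tensor m m
    ‖P - P ∘L Ph ∘L P‖ ≤ 4 * ‖n - m‖ ^ 2 := by
  intro P Ph
  have hPm : ‖P m‖ ≤ 2 * ‖n - m‖ := norm_id_sub_tensor_self_apply_le hn m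
  calc ‖P - P ∘L Ph ∘L P‖ = ‖P m‖ ^ 2 := by
        rw [sub_comp_id_sub_tensor_comp (isIdempotentElem_id_sub_tensor_self hn)
          (isSymmetric_id_sub_tensor_self n), norm_tensor, sq]
    _ ≤ (2 * ‖n - m‖) ^ 2 := by gcongr
    _ = 4 * ‖n - m‖ ^ 2 := by ring

/-- for unit vectors `n`, `m`, with `P = id − n ⊗ n` and
`P_h = id − m ⊗ m`, we have `‖P − P ∘ P_h ∘ P‖ ≤ 4‖n − m‖²`. -/
theorem stmt_2 {E : Type*} [NormedAddCommGroup E] [InnerProductSpace ℝ E]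
    (n m : E) (hn : ‖n‖ = 1) (hm : ‖m‖ = 1) :
    let P : E →L[ℝ] E := ContinuousLinearMap.id ℝ E - tensor n n
    let Ph : E →L[ℝ] E := ContinuousLinearMap.id ℝ E - tensor m m
    ‖P - P ∘L Ph ∘L P‖ ≤ 4 * ‖n - m‖ ^ 2 :=
  stmt_2_general n m hn
end

section
/- Let H be a real Hilbert space and define, for pairs U = (u, p) and V = (v, q) in H × H, the Masud–Hughes form A(U, V) = ⟪u, v⟫ + ⟪p, v⟫ − ⟪u, q⟫ + (1/2) ⟪u + p, −v + q⟫. Then (i) |A(U, V)| ≤ sqrt(‖u‖² + ‖p‖²) · sqrt(‖v‖² + ‖q‖²) for all U, V; (ii) A(U, U) = (1/2)(‖u‖² + ‖p‖²); and consequently (iii) for every continuous linear functional L on H × H there exists a unique U ∈ H × H such that A(U, V) = L(V) for all V ∈ H × H. (Well-posedness of the Masud–Hughes weak formulation, obtained from boundedness and coercivity via the Lax–Milgram theorem.) -/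
open scoped RealInnerProductSpace

/-!
Expanding the inner products gives `A((u, p), (v, q)) = (⟪u + p, v⟫ + ⟪p - u, q⟫) / 2`. Boundedness
and coercivity are read off this formula. Writing `L (v, q) = ⟪f, v⟫ + ⟪g, q⟫` by the Riesz
representation theorem on each factor, `U = (f - g, f + g)` solves the problem, and coercivity makes
the solution unique, as in the Lax–Milgram theorem.
-/

/-- The Masud–Hughes bilinear form on pairs. -/
noncomputable def masudHughes {H : Type*} [NormedAddCommGroup H] [InnerProductSpace ℝ H]
    (U V : H × H) : ℝ :=
  ⟪U.1, V.1⟫ + ⟪U.2, V.1⟫ - ⟪U.1, V.2⟫ + (1 / 2) * ⟪U.1 + U.2, -V.1 + V.2⟫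

theorem add_mul_add_le_two_mul_sqrt_mul_sqrt (a b c d : ℝ) :
    (a + b) * (c + d) ≤ 2 * (√(a ^ 2 + b ^ 2) * √(c ^ 2 + d ^ 2)) := by
  have hab : |a + b| ≤ √(2 * (a ^ 2 + b ^ 2)) :=
    Real.abs_le_sqrt (by nlinarith [sq_nonneg (a - b)])
  have hcd : |c + d| ≤ √(2 * (c ^ 2 + d ^ 2)) :=
    Real.abs_le_sqrt (by nlinarith [sq_nonneg (c - d)])
  calc (a + b) * (c + d) ≤ |a + b| * |c + d| := (le_abs_self _).trans (abs_mul _ _).le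
    _ ≤ √(2 * (a ^ 2 + b ^ 2)) * √(2 * (c ^ 2 + d ^ 2)) :=
      mul_le_mul hab hcd (abs_nonneg _) (Real.sqrt_nonneg _)
    _ = 2 * (√(a ^ 2 + b ^ 2) * √(c ^ 2 + d ^ 2)) := by
      rw [Real.sqrt_mul zero_le_two, Real.sqrt_mul zero_le_two,
        mul_mul_mul_comm, Real.mul_self_sqrt zero_le_two]

namespace ContinuousLinearMap

variable {H : Type*} [NormedAddCommGroup H] [InnerProductSpace ℝ H] [CompleteSpace H]

theorem exists_inner_add_inner_eq (L : (H × H) →L[ℝ] ℝ) :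
    ∃ f g : H, ∀ v q : H, L (v, q) = ⟪f, v⟫ + ⟪g, q⟫ := by
  refine ⟨(InnerProductSpace.toDual ℝ H).symm (L.comp (inl ℝ H H)),
    (InnerProductSpace.toDual ℝ H).symm (L.comp (inr ℝ H H)), fun v q => ?_⟩
  simp only [InnerProductSpace.toDual_symm_apply, comp_apply, inl_apply, inr_apply, ← map_add,
    Prod.mk_add_mk, add_zero, zero_add]

end ContinuousLinearMap

section MasudHughes

variable {H : Type*} [NormedAddCommGroup H] [InnerProductSpace ℝ H]

theorem masudHughes_mk (u p v q : H) :
    masudHughes (u, p) (v, q) = (⟪u + p, v⟫ + ⟪p - u, q⟫) / 2 := by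
  simp only [masudHughes, inner_add_left, inner_sub_left, inner_add_right, inner_neg_right]
  ring

theorem masudHughes_self (U : H × H) :
    masudHughes U U = (1 / 2) * (‖U.1‖ ^ 2 + ‖U.2‖ ^ 2) := by
  rw [masudHughes_mk, inner_add_left, inner_sub_left, real_inner_comm U.2 U.1,
    real_inner_self_eq_norm_sq, real_inner_self_eq_norm_sq]
  ring

theorem masudHughes_sub_left (U U' V : H × H) :
    masudHughes (U - U') V = masudHughes U V - masudHughes U' V := by
  simp only [masudHughes, Prod.fst_sub, Prod.snd_sub, inner_add_left, inner_sub_left]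
  ring

theorem abs_masudHughes_le (U V : H × H) :
    |masudHughes U V| ≤ (‖U.1‖ + ‖U.2‖) * (‖V.1‖ + ‖V.2‖) / 2 := by
  rw [masudHughes_mk, abs_div, abs_two]
  gcongr
  calc |⟪U.1 + U.2, V.1⟫ + ⟪U.2 - U.1, V.2⟫|
      ≤ ‖U.1 + U.2‖ * ‖V.1‖ + ‖U.2 - U.1‖ * ‖V.2‖ :=
        (abs_add_le _ _).trans
          (add_le_add (abs_real_inner_le_norm _ _) (abs_real_inner_le_norm _ _))
    _ ≤ (‖U.1‖ + ‖U.2‖) * ‖V.1‖ + (‖U.1‖ + ‖U.2‖) * ‖V.2‖ := by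
        gcongr
        · exact norm_add_le _ _
        · exact (norm_sub_le _ _).trans_eq (add_comm _ _)
    _ = (‖U.1‖ + ‖U.2‖) * (‖V.1‖ + ‖V.2‖) := by ring

theorem abs_masudHughes_le_sqrt_mul_sqrt (U V : H × H) :
    |masudHughes U V| ≤ √(‖U.1‖ ^ 2 + ‖U.2‖ ^ 2) * √(‖V.1‖ ^ 2 + ‖V.2‖ ^ 2) := by
  have := add_mul_add_le_two_mul_sqrt_mul_sqrt ‖U.1‖ ‖U.2‖ ‖V.1‖ ‖V.2‖
  linarith [abs_masudHughes_le U V]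

theorem eq_zero_of_masudHughes_self_eq_zero {W : H × H} (h : masudHughes W W = 0) : W = 0 := by
  rw [masudHughes_self] at h
  have hsq : ‖W.1‖ ^ 2 = 0 ∧ ‖W.2‖ ^ 2 = 0 :=
    (add_eq_zero_iff_of_nonneg (by positivity) (by positivity)).1 (by linarith)
  simp only [ne_eq, OfNat.ofNat_ne_zero, not_false_eq_true, pow_eq_zero_iff, norm_eq_zero] at hsq
  exact Prod.ext hsq.1 hsq.2

theorem masudHughes_left_injective {U U' : H × H} (h : ∀ V, masudHughes U V = masudHughes U' V) :
    U = U' :=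
  sub_eq_zero.1 <| eq_zero_of_masudHughes_self_eq_zero <| by rw [masudHughes_sub_left, h, sub_self]

theorem exists_masudHughes_eq [CompleteSpace H] (L : (H × H) →L[ℝ] ℝ) :
    ∃ U : H × H, ∀ V, masudHughes U V = L V := by
  obtain ⟨f, g, hL⟩ := L.exists_inner_add_inner_eq
  refine ⟨(f - g, f + g), fun ⟨v, q⟩ => ?_⟩
  rw [masudHughes_mk, hL]
  simp only [inner_add_left, inner_sub_left]
  ring

end MasudHughes

/-- boundedness, coercivity and, via Lax–Milgram, well-posedness of
the Masud–Hughes weak formulation. -/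
theorem stmt_9 {H : Type*} [NormedAddCommGroup H] [InnerProductSpace ℝ H] [CompleteSpace H] :
    (∀ U V : H × H, |masudHughes U V| ≤
        Real.sqrt (‖U.1‖ ^ 2 + ‖U.2‖ ^ 2) * Real.sqrt (‖V.1‖ ^ 2 + ‖V.2‖ ^ 2)) ∧
    (∀ U : H × H, masudHughes U U = (1 / 2) * (‖U.1‖ ^ 2 + ‖U.2‖ ^ 2)) ∧
    (∀ L : (H × H) →L[ℝ] ℝ, ∃! U : H × H, ∀ V : H × H, masudHughes U V = L V) := by
  refine ⟨abs_masudHughes_le_sqrt_mul_sqrt, masudHughes_self, fun L => ?_⟩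
  obtain ⟨U, hU⟩ := exists_masudHughes_eq L
  exact ⟨U, hU, fun U' hU' => masudHughes_left_injective fun V => (hU' V).trans (hU V).symm⟩
end
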